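/- arXiv:0705.0985 — 2 statements merged into one kernel-verified Lean document; each statement's English description precedes it below -/
import Mathlib

section
/- Let g be a finite-dimensional real Lie algebra with an ad-invariant inner product Q, h ⊆ g a Lie subalgebra, and m = h^⊥. Let t > 0 and x, y ∈ g, and set x^t := t x_h + x_m, y^t := t y_h + y_m. If [x^t, y^t] = 0, then K_t(x,y) = −(1/4) t (t − 1)³ (1 + 3t) ‖[x_h, y_h]‖². -/
/-!
Write `a = [x_h, y_h]`, `b = [x_h, y_m] + [x_m, y_h]` and `c = [x_m, y_m]`. By bilinearity the
hypothesis reads `t² a + t b + c = 0`. Ad-invariance gives `[h, m] ⊆ m`, so `b ∈ m`, while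
`a ∈ h`; projecting the relation onto `h` and `m` yields `c_h = -t² a` and `c_m = -t b`. Hence the
first term of `K_t` vanishes and the rest is a polynomial in `t` times `‖a‖²`.
-/

variable {g : Type*} [LieRing g] [LieAlgebra ℝ g] [FiniteDimensional ℝ g]

/-- The unnormalized sectional curvature expression `K_t(x,y)` of the left invariant metric
`Q_t = t Q|_h + Q|_m`, expressed via the inner product `Q` (as a bilinear form, so that
`‖z‖² = Q z z`) and the orthogonal projection `π` onto the subalgebra `h`
(so `x_h = π x` and `x_m = x - π x`). -/
noncomputable def Kcurv (Q : LinearMap.BilinForm ℝ g) (π : g →ₗ[ℝ] g)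
    (t : ℝ) (x y : g) : ℝ :=
  (1/4) * Q (⁅x - π x, y - π y⁆ - π ⁅x - π x, y - π y⁆
        + t • ⁅π x, y - π y⁆ + t • ⁅x - π x, π y⁆)
      (⁅x - π x, y - π y⁆ - π ⁅x - π x, y - π y⁆
        + t • ⁅π x, y - π y⁆ + t • ⁅x - π x, π y⁆)
    + (1/4) * t * Q ⁅π x, π y⁆ ⁅π x, π y⁆
    + (1/2) * t * (3 - 2*t) * Q ⁅π x, π y⁆ (π ⁅x - π x, y - π y⁆)
    + (1 - (3/4)*t) * Q (π ⁅x - π x, y - π y⁆) (π ⁅x - π x, y - π y⁆)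

section OrthogonalProjection

variable {R M : Type*} [CommRing R] [AddCommGroup M] [Module R M]

def IsOrthProj (Q : LinearMap.BilinForm R M) (p : Submodule R M) (π : M →ₗ[R] M) : Prop :=
  (∀ x, π x ∈ p) ∧ ∀ x, ∀ w ∈ p, Q (x - π x) w = 0

variable {Q : LinearMap.BilinForm R M} {p : Submodule R M} {π : M →ₗ[R] M}

theorem IsOrthProj.apply_eq_self (hπ : IsOrthProj Q p π) (hQ : Q.toQuadraticMap.Anisotropic)
    {v : M} (hv : v ∈ p) : π v = v :=
  (sub_eq_zero.mp (hQ _ (hπ.2 v _ (p.sub_mem hv (hπ.1 v))))).symm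

theorem IsOrthProj.apply_eq_zero (hπ : IsOrthProj Q p π) (hQ : Q.toQuadraticMap.Anisotropic)
    {v : M} (hv : ∀ w ∈ p, Q v w = 0) : π v = 0 := by
  refine hQ _ ?_
  have hvπ := hπ.2 v _ (hπ.1 v)
  rw [map_sub, LinearMap.sub_apply, hv _ (hπ.1 v), zero_sub, neg_eq_zero] at hvπ
  exact hvπ

end OrthogonalProjection

section AdInvariant

variable {R L : Type*} [CommRing R] [LieRing L] [LieAlgebra R L]

theorem lie_smul_add_lie_smul_add (t : R) (u v u' v' : L) :
    ⁅t • u + v, t • u' + v'⁆ = (t * t) • ⁅u, u'⁆ + t • (⁅u, v'⁆ + ⁅v, u'⁆) + ⁅v, v'⁆ := by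
  simp only [add_lie, lie_add, smul_lie, lie_smul, smul_smul, smul_add]
  abel

variable {Q : LinearMap.BilinForm R L} {h : LieSubalgebra R L}

theorem lie_orthogonal_of_mem_of_orthogonal (hinv : ∀ x y z : L, Q ⁅z, x⁆ y + Q x ⁅z, y⁆ = 0)
    {z v : L} (hz : z ∈ h) (hv : ∀ w ∈ h, Q v w = 0) : ∀ w ∈ h, Q ⁅z, v⁆ w = 0 := by
  intro w hw
  linear_combination hinv v w z - hv _ (h.lie_mem hz hw)

theorem lie_orthogonal_of_orthogonal_of_mem (hinv : ∀ x y z : L, Q ⁅z, x⁆ y + Q x ⁅z, y⁆ = 0)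
    {z v : L} (hz : z ∈ h) (hv : ∀ w ∈ h, Q v w = 0) : ∀ w ∈ h, Q ⁅v, z⁆ w = 0 := by
  intro w hw
  rw [← lie_skew, map_neg, LinearMap.neg_apply,
    lie_orthogonal_of_mem_of_orthogonal hinv hz hv w hw, neg_zero]

end AdInvariant

theorem Kcurv_eq_of_proj_lie {L : Type*} [LieRing L] [LieAlgebra ℝ L]
    (Q : LinearMap.BilinForm ℝ L) (π : L →ₗ[ℝ] L) (t : ℝ) (x y : L)
    (hm : ⁅x - π x, y - π y⁆ - π ⁅x - π x, y - π y⁆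
        + t • ⁅π x, y - π y⁆ + t • ⁅x - π x, π y⁆ = 0)
    (hh : π ⁅x - π x, y - π y⁆ = -((t * t) • ⁅π x, π y⁆)) :
    Kcurv Q π t x y
      = -(1/4) * t * (t - 1) ^ 3 * (1 + 3 * t) * Q ⁅π x, π y⁆ ⁅π x, π y⁆ := by
  rw [Kcurv, hm, hh]
  simp only [map_zero, map_neg, map_smul, LinearMap.neg_apply,
    LinearMap.smul_apply, smul_eq_mul]
  ring

theorem stmt_3_general
    (Q : LinearMap.BilinForm ℝ g)
    (hpos : ∀ x : g, x ≠ 0 → 0 < Q x x)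
    (hinv : ∀ x y z : g, Q ⁅z, x⁆ y + Q x ⁅z, y⁆ = 0)
    (h : LieSubalgebra ℝ g)
    (π : g →ₗ[ℝ] g)
    (hπh : ∀ x : g, π x ∈ h)
    (hπm : ∀ x : g, ∀ w ∈ h, Q (x - π x) w = 0)
    (t : ℝ) (x y : g)
    (hc : ⁅t • π x + (x - π x), t • π y + (y - π y)⁆ = 0) :
    Kcurv Q π t x y
      = -(1/4) * t * (t - 1) ^ 3 * (1 + 3 * t) * Q ⁅π x, π y⁆ ⁅π x, π y⁆ := by
  have hQ : Q.toQuadraticMap.Anisotropic := fun v hv => not_imp_comm.mp (hpos v) hv.not_gt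
  have hπ : IsOrthProj Q h.toSubmodule π := ⟨hπh, hπm⟩
  set a := ⁅π x, π y⁆
  set b := ⁅π x, y - π y⁆ + ⁅x - π x, π y⁆
  set c := ⁅x - π x, y - π y⁆
  have hπa : π a = a := hπ.apply_eq_self hQ (h.lie_mem (hπh x) (hπh y))
  have hπb : π b = 0 := hπ.apply_eq_zero hQ fun w hw => by
    simp only [b, map_add, LinearMap.add_apply,
      lie_orthogonal_of_mem_of_orthogonal hinv (hπh x) (hπm y) w hw,
      lie_orthogonal_of_orthogonal_of_mem hinv (hπh y) (hπm x) w hw, add_zero]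
  have hrel : (t * t) • a + t • b + c = 0 := by
    rwa [lie_smul_add_lie_smul_add] at hc
  have hc_eq : c = -((t * t) • a) - t • b := by
    linear_combination (norm := module) hrel
  have hπc : π c = -((t * t) • a) := by
    rw [hc_eq, map_sub, map_neg, map_smul, map_smul, hπa, hπb, smul_zero, sub_zero]
  refine Kcurv_eq_of_proj_lie Q π t x y ?_ hπc
  rw [hπc]
  linear_combination (norm := module) hc_eq

/-- If `⁅x^t, y^t⁆ = 0` then `K_t(x,y) = -(1/4) t (t-1)³ (1+3t) ‖[x_h,y_h]‖²`. -/
theorem stmt_3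
    (Q : LinearMap.BilinForm ℝ g)
    (hsym : ∀ x y : g, Q x y = Q y x)
    (hpos : ∀ x : g, x ≠ 0 → 0 < Q x x)
    (hinv : ∀ x y z : g, Q ⁅z, x⁆ y + Q x ⁅z, y⁆ = 0)
    (h : LieSubalgebra ℝ g)
    (π : g →ₗ[ℝ] g)
    (hπh : ∀ x : g, π x ∈ h)
    (hπm : ∀ x : g, ∀ w ∈ h, Q (x - π x) w = 0)
    (t : ℝ) (ht : 0 < t) (x y : g)
    (hc : ⁅t • π x + (x - π x), t • π y + (y - π y)⁆ = 0) :
    Kcurv Q π t x y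
      = -(1/4) * t * (t - 1) ^ 3 * (1 + 3 * t) * Q ⁅π x, π y⁆ ⁅π x, π y⁆ :=
  stmt_3_general Q hpos hinv h π hπh hπm t x y hc
end

section
/- Let g be a finite-dimensional real Lie algebra with an ad-invariant inner product Q, h ⊆ g a simple Lie subalgebra, and m = h^⊥. Suppose that all u, v ∈ g with [u,v] = 0 satisfy [u_h, v_h] = 0. Let y ∈ m be such that [h', y] = 0 for all h' ∈ h, let g' be the ideal of g generated by h and g'' the ideal of g generated by y. Then Q(a, b) = 0 for all a ∈ g', b ∈ g'', and [g', g''] = 0; in particular Q(a, y) = 0 for all a ∈ g'. -/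
variable {g : Type*} [LieRing g] [LieAlgebra ℝ g] [FiniteDimensional ℝ g]

/-! The flows `exp (s • ad z)` are automorphisms of `g`, so they preserve commuting pairs;
differentiating `⁅π u, π v⁆ = 0` along them any number of times shows that all iterated Leibniz
derivatives of `(a, b) ↦ ⁅π a, π b⁆` vanish on commuting pairs. Evaluated at `(w, y)` with `w ∈ h`,
and by induction on the length of the word, this gives `⁅w, π (ad zₙ ⋯ ad z₁ y)⁆ = 0` for all
`w ∈ h`; since the simple algebra `h` has trivial centre, `π` kills every iterated bracket of `y`,
i.e. the ideal generated by `y` lies in `m`. Its `Q`-orthogonal complement is an ideal containing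
`h`, hence the ideal generated by `h`, and `⁅g', g''⁆ ⊆ g' ∩ g''` is `Q`-isotropic, hence zero. -/

open NormedSpace

section LinearFlow

variable {E F : Type*} [NormedAddCommGroup E] [NormedSpace ℝ E] [CompleteSpace E]
  [NormedAddCommGroup F] [NormedSpace ℝ F]

theorem hasDerivAt_exp_smul_apply (D : E →L[ℝ] E) (v : E) (t : ℝ) :
    HasDerivAt (fun s : ℝ => exp (s • D) v) (D (exp (t • D) v)) t :=
  (hasDerivAt_exp_smul_const' D t).clm_apply (hasDerivAt_const t v) |>.congr_deriv (by simp)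

theorem eq_exp_smul_apply_of_hasDerivAt (D : E →L[ℝ] E) {x : ℝ → E}
    (hx : ∀ t, HasDerivAt x (D (x t)) t) (s : ℝ) : x s = exp (s • D) (x 0) := by
  -- `t ↦ exp ((s - t) • D) (x t)` has zero derivative; its values at `s` and `0` are the two sides.
  set ρ : ℝ → E := fun t => exp ((s - t) • D) (x t)
  have hρ : ∀ t, HasDerivAt ρ 0 t := by
    intro t
    have hexp : HasDerivAt (fun t : ℝ => exp ((s - t) • D))
        (-(D * exp ((s - t) • D))) t := by
      have := (hasDerivAt_exp_smul_const' D (s - t)).scomp t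
        ((hasDerivAt_const t s).sub (hasDerivAt_id t))
      simpa [Function.comp_def] using this
    have hcomm : Commute D (exp ((s - t) • D)) := ((Commute.refl D).smul_right _).exp_right
    convert hexp.clm_apply (hx t) using 1
    rw [neg_apply, hcomm.eq]
    exact (neg_add_cancel _).symm
  have hconst := is_const_of_deriv_eq_zero (fun t => (hρ t).differentiableAt)
    (fun t => (hρ t).deriv) s 0
  simpa [ρ] using hconst

theorem hasDerivAt_apply₂_exp_smul (β : E →L[ℝ] E →L[ℝ] F) (D : E →L[ℝ] E) (a b : E) (t : ℝ) :
    HasDerivAt (fun s : ℝ => β (exp (s • D) a) (exp (s • D) b))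
      (β (D (exp (t • D) a)) (exp (t • D) b) + β (exp (t • D) a) (D (exp (t • D) b))) t :=
  (β.hasFDerivAt.comp_hasDerivAt t (hasDerivAt_exp_smul_apply D a t)).clm_apply
    (hasDerivAt_exp_smul_apply D b t)

theorem map_exp_smul_of_derivation (β : E →L[ℝ] E →L[ℝ] E) (D : E →L[ℝ] E)
    (hD : ∀ u v, D (β u v) = β (D u) v + β u (D v)) (a b : E) (s : ℝ) :
    β (exp (s • D) a) (exp (s • D) b) = exp (s • D) (β a b) := by
  have hx (t : ℝ) := (hD _ _).symm ▸ hasDerivAt_apply₂_exp_smul β D a b t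
  simpa using eq_exp_smul_apply_of_hasDerivAt D hx s

theorem leibniz_eq_zero_of_derivation (β' : E →L[ℝ] E →L[ℝ] E) (β : E →L[ℝ] E →L[ℝ] F)
    (hβ : ∀ a b, β' a b = 0 → β a b = 0) (D : E →L[ℝ] E)
    (hD : ∀ u v, D (β' u v) = β' (D u) v + β' u (D v)) {a b : E} (hab : β' a b = 0) :
    β (D a) b + β a (D b) = 0 := by
  have hflow := hasDerivAt_apply₂_exp_smul β D a b 0
  have hzero : (fun s : ℝ => β (exp (s • D) a) (exp (s • D) b)) = fun _ => 0 := by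
    funext s
    exact hβ _ _ (by rw [map_exp_smul_of_derivation β' D hD, hab, map_zero])
  rw [hzero] at hflow
  simpa using (hflow.unique (hasDerivAt_const 0 0))

end LinearFlow

open LieAlgebra

section Leibniz

variable {R L V : Type*} [CommRing R] [LieRing L] [LieAlgebra R L] [AddCommGroup V] [Module R V]

-- `adWord [z₁, …, zₙ] = ad zₙ ∘ ⋯ ∘ ad z₁`
variable (R) in
def adWord : List L → Module.End R L
  | [] => 1
  | z :: l => adWord l * ad R L z

theorem adWord_cons_apply (z : L) (l : List L) (v : L) :
    adWord R (z :: l) v = adWord R l ⁅z, v⁆ := rfl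

def iterLeibnizDeriv (β : L →ₗ[R] L →ₗ[R] V) : List L → L →ₗ[R] L →ₗ[R] V
  | [] => β
  | z :: l => iterLeibnizDeriv β l ∘ₗ ad R L z + (iterLeibnizDeriv β l).compl₂ (ad R L z)

theorem iterLeibnizDeriv_cons_apply (β : L →ₗ[R] L →ₗ[R] V) (z : L) (l : List L) (a b : L) :
    iterLeibnizDeriv β (z :: l) a b =
      iterLeibnizDeriv β l ⁅z, a⁆ b + iterLeibnizDeriv β l a ⁅z, b⁆ := rfl

theorem iterLeibnizDeriv_apply_of_forall_length_lt (β : L →ₗ[R] L →ₗ[R] V) (l : List L)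
    {v : L} (hv : ∀ m : List L, m.length < l.length → ∀ x, β x (adWord R m v) = 0) (a : L) :
    iterLeibnizDeriv β l a v = β a (adWord R l v) := by
  induction l generalizing a v with
  | nil => rfl
  | cons z l ih =>
    rw [iterLeibnizDeriv_cons_apply, ih (fun m hm => hv m (by simp; omega)),
      ih (v := ⁅z, v⁆) (fun m hm => hv (z :: m) (by simpa using hm)), hv l (by simp), zero_add,
      adWord_cons_apply]

end Leibniz

section Real

variable {L V : Type*} [LieRing L] [LieAlgebra ℝ L] [FiniteDimensional ℝ L]
  [AddCommGroup V] [Module ℝ V] [FiniteDimensional ℝ V]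

theorem leibniz_eq_zero_of_lie_eq_zero (β : L →ₗ[ℝ] L →ₗ[ℝ] V)
    (hβ : ∀ a b : L, ⁅a, b⁆ = 0 → β a b = 0) (z : L) {a b : L} (hab : ⁅a, b⁆ = 0) :
    β ⁅z, a⁆ b + β a ⁅z, b⁆ = 0 := by
  let bracket : L →ₗ[ℝ] L →ₗ[ℝ] L := (ad ℝ L : L →ₗ[ℝ] Module.End ℝ L)
  let eL := (Module.finBasis ℝ L).equivFun
  let _ : NormedAddCommGroup L := NormedAddCommGroup.induced L _ eL eL.injective
  let _ : NormedSpace ℝ L := NormedSpace.induced ℝ L _ eL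
  let eV := (Module.finBasis ℝ V).equivFun
  let _ : NormedAddCommGroup V := NormedAddCommGroup.induced V _ eV eV.injective
  let _ : NormedSpace ℝ V := NormedSpace.induced ℝ V _ eV
  have : CompleteSpace L := FiniteDimensional.complete ℝ L
  let bracketL : L →L[ℝ] L →L[ℝ] L :=
    LinearMap.toContinuousLinearMap (LinearMap.toContinuousLinearMap.toLinearMap ∘ₗ bracket)
  let βL : L →L[ℝ] L →L[ℝ] V :=
    LinearMap.toContinuousLinearMap (LinearMap.toContinuousLinearMap.toLinearMap ∘ₗ β)
  exact leibniz_eq_zero_of_derivation bracketL βL hβ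
    (LinearMap.toContinuousLinearMap (ad ℝ L z)) (leibniz_lie z) hab

theorem iterLeibnizDeriv_eq_zero_of_lie_eq_zero (β : L →ₗ[ℝ] L →ₗ[ℝ] V)
    (hβ : ∀ a b : L, ⁅a, b⁆ = 0 → β a b = 0) (l : List L) {a b : L} (hab : ⁅a, b⁆ = 0) :
    iterLeibnizDeriv β l a b = 0 := by
  induction l generalizing a b with
  | nil => exact hβ a b hab
  | cons z l ih => exact leibniz_eq_zero_of_lie_eq_zero _ (fun _ _ => ih) z hab

end Real

theorem LieSubalgebra.eq_zero_of_forall_lie_eq_zero {K L : Type*} [Field K] [LieRing L]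
    [LieAlgebra K L] {h : LieSubalgebra K L} [LieAlgebra.IsSimple K h] {c : L} (hc : c ∈ h)
    (hcen : ∀ w ∈ h, ⁅w, c⁆ = 0) : c = 0 := by
  have hmem : (⟨c, hc⟩ : h) ∈ LieAlgebra.center K h := by
    rw [LieModule.mem_maxTrivSubmodule]
    exact fun w => Subtype.ext (hcen w w.2)
  rw [LieAlgebra.center_eq_bot, LieSubmodule.mem_bot] at hmem
  exact congrArg Subtype.val hmem

theorem proj_eq_self_of_mem {M : Type*} [AddCommGroup M] [Module ℝ M]
    (Q : LinearMap.BilinForm ℝ M) (hpos : ∀ x : M, x ≠ 0 → 0 < Q x x) (p : Submodule ℝ M)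
    (π : M →ₗ[ℝ] M) (hπp : ∀ x, π x ∈ p) (hπ : ∀ x, ∀ w ∈ p, Q (x - π x) w = 0)
    {w : M} (hw : w ∈ p) : π w = w := by
  have hQ := hπ w (w - π w) (p.sub_mem hw (hπp w))
  by_contra hne
  exact (hpos _ (sub_ne_zero.mpr (Ne.symm hne))).ne' hQ

theorem apply_eq_zero_of_mem_lieSpan_singleton {R L M : Type*} [CommRing R] [LieRing L]
    [LieAlgebra R L] [AddCommGroup M] [Module R M] (π : L →ₗ[R] M) {y : L}
    (hy : ∀ l, π (adWord R l y) = 0) {b : L} (hb : b ∈ LieSubmodule.lieSpan R L {y}) :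
    π b = 0 := by
  suffices ∀ l, π (adWord R l b) = 0 from this []
  induction hb using LieSubmodule.lieSpan_induction with
  | mem x hx => exact (Set.mem_singleton_iff.mp hx) ▸ hy
  | zero => simp
  | add u v _ _ hu hv => simp [hu, hv]
  | smul r u _ hu => simp [hu]
  | lie z u _ hu => exact fun l => hu (z :: l)

theorem proj_adWord_eq_zero (h : LieSubalgebra ℝ g) [LieAlgebra.IsSimple ℝ h] (π : g →ₗ[ℝ] g)
    (hπh : ∀ x, π x ∈ h) (hπ : ∀ w ∈ h, π w = w) (hcomm : ∀ u v : g, ⁅u, v⁆ = 0 → ⁅π u, π v⁆ = 0)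
    {y : g} (hy : ∀ w ∈ h, ⁅w, y⁆ = 0) (l : List g) : π (adWord ℝ l y) = 0 := by
  induction hn : l.length using Nat.strong_induction_on generalizing l with
  | _ n ih =>
  let β : g →ₗ[ℝ] g →ₗ[ℝ] g := (ad ℝ g : g →ₗ[ℝ] Module.End ℝ g).compl₁₂ π π
  have hshort : ∀ m : List g, m.length < l.length → ∀ x, β x (adWord ℝ m y) = 0 :=
    fun m hm x => by simp [β, ih m.length (hn ▸ hm) m rfl]
  refine h.eq_zero_of_forall_lie_eq_zero (hπh _) fun w hw => ?_
  have hβ := iterLeibnizDeriv_eq_zero_of_lie_eq_zero β hcomm l (hy w hw)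
  rwa [iterLeibnizDeriv_apply_of_forall_length_lt β l hshort, LinearMap.compl₁₂_apply,
    hπ w hw] at hβ

theorem stmt_9_general
    (Q : LinearMap.BilinForm ℝ g)
    (hsym : ∀ x y : g, Q x y = Q y x)
    (hpos : ∀ x : g, x ≠ 0 → 0 < Q x x)
    (hinv : ∀ x y z : g, Q ⁅z, x⁆ y + Q x ⁅z, y⁆ = 0)
    (h : LieSubalgebra ℝ g)
    (π : g →ₗ[ℝ] g)
    (hπh : ∀ x : g, π x ∈ h)
    (hπm : ∀ x : g, ∀ w ∈ h, Q (x - π x) w = 0)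
    (hsimple : LieAlgebra.IsSimple ℝ h)
    (hcomm : ∀ u v : g, ⁅u, v⁆ = 0 → ⁅π u, π v⁆ = 0)
    (y : g) (hy : ∀ h' ∈ h, ⁅h', y⁆ = 0) :
    (∀ a ∈ LieSubmodule.lieSpan ℝ g (h : Set g),
      ∀ b ∈ LieSubmodule.lieSpan ℝ g ({y} : Set g), Q a b = 0 ∧ ⁅a, b⁆ = 0)
    ∧ ∀ a ∈ LieSubmodule.lieSpan ℝ g (h : Set g), Q a y = 0 := by
  set I := LieSubmodule.lieSpan ℝ g (h : Set g)
  set J := LieSubmodule.lieSpan ℝ g ({y} : Set g)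
  have hQ : Q.lieInvariant g := fun z a b => eq_neg_of_add_eq_zero_left (hinv a b z)
  have hπ : ∀ w ∈ h, π w = w :=
    fun w hw => proj_eq_self_of_mem Q hpos h.toSubmodule π hπh hπm hw
  have hJ : ∀ b ∈ J, π b = 0 :=
    fun b => apply_eq_zero_of_mem_lieSpan_singleton π (proj_adWord_eq_zero h π hπh hπ hcomm hy)
  have hIJ : I ≤ LieAlgebra.InvariantForm.orthogonal Q hQ J := by
    refine LieSubmodule.lieSpan_le.mpr fun w hw => ?_
    refine (LieAlgebra.InvariantForm.mem_orthogonal Q hQ J w).mpr fun b hb => ?_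
    simpa [hJ b hb] using hπm b w hw
  have horth : ∀ a ∈ I, ∀ b ∈ J, Q a b = 0 := fun a ha b hb =>
    hsym a b ▸ (LieAlgebra.InvariantForm.mem_orthogonal Q hQ J a).mp (hIJ ha) b hb
  refine ⟨fun a ha b hb => ⟨horth a ha b hb, ?_⟩,
    fun a ha => horth a ha y (LieSubmodule.subset_lieSpan rfl)⟩
  have hself := horth _ (lie_mem_left ℝ g I a b ha) _ (lie_mem_right ℝ g J a b hb)
  by_contra hne
  exact (hpos _ hne).ne' hself

/-- Step 2: if `h` is simple and `y ∈ m` commutes with all of `h`, then the ideals of `g`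
generated by `h` and by `y` are `Q`-orthogonal and commute; in particular the ideal
generated by `h` is orthogonal to `y`. -/
theorem stmt_9
    (Q : LinearMap.BilinForm ℝ g)
    (hsym : ∀ x y : g, Q x y = Q y x)
    (hpos : ∀ x : g, x ≠ 0 → 0 < Q x x)
    (hinv : ∀ x y z : g, Q ⁅z, x⁆ y + Q x ⁅z, y⁆ = 0)
    (h : LieSubalgebra ℝ g)
    (π : g →ₗ[ℝ] g)
    (hπh : ∀ x : g, π x ∈ h)
    (hπm : ∀ x : g, ∀ w ∈ h, Q (x - π x) w = 0)
    (hsimple : LieAlgebra.IsSimple ℝ h)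
    (hcomm : ∀ u v : g, ⁅u, v⁆ = 0 → ⁅π u, π v⁆ = 0)
    (y : g) (hym : ∀ w ∈ h, Q y w = 0) (hy : ∀ h' ∈ h, ⁅h', y⁆ = 0) :
    (∀ a ∈ LieSubmodule.lieSpan ℝ g (h : Set g),
      ∀ b ∈ LieSubmodule.lieSpan ℝ g ({y} : Set g), Q a b = 0 ∧ ⁅a, b⁆ = 0)
    ∧ ∀ a ∈ LieSubmodule.lieSpan ℝ g (h : Set g), Q a y = 0 :=
  stmt_9_general Q hsym hpos hinv h π hπh hπm hsimple hcomm y hy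
end
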